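/- Let G be a strongly connected digraph, H its condensed graph (contracting 2-edge-connected components). Two vertices u, w of G lying in different 2-edge-connected components are 2-edge-connected in G if and only if for every cut (S,T) of H separating h(u) from h(w) there are at least two edges of H from S to T and at least two from T to S. -/

import Mathlib

variable {V : Type*}

/-- A walk in a digraph given by its edge set `E`, recorded as a list of edges. -/
inductive IsWalk (E : Set (V × V)) : V → V → List (V × V) → Prop
  | nil (u : V) : IsWalk E u u []
  | cons {u v w : V} {p : List (V × V)} (h : (u, v) ∈ E) (hp : IsWalk E v w p) :
      IsWalk E u w ((u, v) :: p)

def Reaches (E : Set (V × V)) (u v : V) : Prop := ∃ p, IsWalk E u v p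

def StronglyConnected (E : Set (V × V)) : Prop := ∀ u v : V, Reaches E u v

/-- Two edge-disjoint directed paths from `u` to `v`. -/
def TwoEDP (E : Set (V × V)) (u v : V) : Prop :=
  ∃ p q, IsWalk E u v p ∧ IsWalk E u v q ∧ p.Disjoint q

/-- `u` and `v` are 2-edge-connected. -/
def TwoEC (E : Set (V × V)) (u v : V) : Prop := TwoEDP E u v ∧ TwoEDP E v u

/-- A 2-edge-connected block: a maximal set of pairwise 2-edge-connected vertices. -/
def Is2ECBlock (E : Set (V × V)) (B : Set V) : Prop :=
  (∀ u ∈ B, ∀ v ∈ B, TwoEC E u v) ∧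
    ∀ C : Set V, B ⊆ C → (∀ u ∈ C, ∀ v ∈ C, TwoEC E u v) → C = B

def SameBlocks (E E' : Set (V × V)) : Prop :=
  ∀ B : Set V, Is2ECBlock E B ↔ Is2ECBlock E' B

/-- A strong bridge: an edge whose removal increases the number of strongly
connected components, i.e. destroys the mutual reachability of some pair. -/
def IsStrongBridge (E : Set (V × V)) (e : V × V) : Prop :=
  e ∈ E ∧ ∃ u v : V, (Reaches E u v ∧ Reaches E v u) ∧
    ¬ (Reaches (E \ {e}) u v ∧ Reaches (E \ {e}) v u)

/-- A 2-edge-connected digraph: strongly connected and stays so after deleting any edge. -/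
def Is2ECGraph (E : Set (V × V)) : Prop :=
  StronglyConnected E ∧ ∀ e ∈ E, StronglyConnected (E \ {e})

/-- Edges of `E` induced on the vertex set `C`. -/
def restrictE (E : Set (V × V)) (C : Set V) : Set (V × V) :=
  {e ∈ E | e.1 ∈ C ∧ e.2 ∈ C}

def SCOn (E' : Set (V × V)) (C : Set V) : Prop :=
  ∀ u ∈ C, ∀ v ∈ C, Reaches E' u v

/-- `E'` is a 2-edge-connected (spanning sub)graph on the vertex set `C`. -/
def Is2ECOn (E' : Set (V × V)) (C : Set V) : Prop :=
  SCOn E' C ∧ ∀ e ∈ E', SCOn (E' \ {e}) C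

/-- A 2-edge-connected component: a maximal vertex set inducing a 2-edge-connected subgraph. -/
def Is2ECComponent (E : Set (V × V)) (C : Set V) : Prop :=
  Is2ECOn (restrictE E C) C ∧
    ∀ D : Set V, C ⊆ D → Is2ECOn (restrictE E D) D → D = C

/-- A solution to 2EC-B: a strongly connected spanning subgraph with the same
2-edge-connected blocks. -/
def IsSolutionB (E E' : Set (V × V)) : Prop :=
  E' ⊆ E ∧ StronglyConnected E' ∧ SameBlocks E' E

/-- The reverse digraph. -/
def revE (E : Set (V × V)) : Set (V × V) := {e | (e.2, e.1) ∈ E}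

/-- A bridge of the flow graph with start vertex `s`: an edge contained in every
walk from `s` to its head. -/
def IsBridge (E : Set (V × V)) (s : V) (e : V × V) : Prop :=
  e ∈ E ∧ ∀ p, IsWalk E s e.2 p → e ∈ p

/-- `u` is a vertex of the walk `p` starting at `s`. -/
def OnWalk (s : V) (p : List (V × V)) (u : V) : Prop :=
  u = s ∨ ∃ e ∈ p, e.2 = u

/-- `u` dominates `w` in the flow graph with start `s`. -/
def Dom (E : Set (V × V)) (s u w : V) : Prop :=
  ∀ p, IsWalk E s w p → OnWalk s p u

def PDom (E : Set (V × V)) (s u w : V) : Prop := Dom E s u w ∧ u ≠ w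

/-- `u` is the immediate dominator of `w`. -/
def Idom (E : Set (V × V)) (s u w : V) : Prop :=
  PDom E s u w ∧ ∀ x, PDom E s x w → Dom E s x u

/-- Marked vertices: roots of the trees of the canonical decomposition of the
dominator tree, i.e. `s` and the heads of bridges of `G(s)`. -/
def Marked (E : Set (V × V)) (s r : V) : Prop :=
  r = s ∨ ∃ e, IsBridge E s e ∧ e.2 = r

/-- `w` belongs to the tree `T(r)` of the canonical decomposition:
`r` is the nearest marked dominator of `w`. -/
def InTree (E : Set (V × V)) (s r w : V) : Prop :=
  Marked E s r ∧ Dom E s r w ∧ ∀ x, Marked E s x → Dom E s x w → Dom E s x r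

/-- A spanning tree of the flow graph `G(s)` rooted at `s`. -/
def IsSpanningTree (E : Set (V × V)) (s : V) (T : Set (V × V)) : Prop :=
  T ⊆ E ∧ (∀ v, Reaches T s v) ∧ (∀ v, v ≠ s → ∃! e, e ∈ T ∧ e.2 = v) ∧
    ∀ e ∈ T, e.2 ≠ s

/-- Two independent spanning trees: for every `v`, the two tree paths from `s`
to `v` share only dominators of `v`. -/
def IndependentTrees (E : Set (V × V)) (s : V) (T₁ T₂ : Set (V × V)) : Prop :=
  IsSpanningTree E s T₁ ∧ IsSpanningTree E s T₂ ∧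
    ∀ v p q, IsWalk T₁ s v p → IsWalk T₂ s v q →
      ∀ u, OnWalk s p u → OnWalk s q u → Dom E s u v

/-- The contraction map defining the first-level auxiliary graph `G_r`:
vertices of `T(r)` stay put, descendants of a marked child `x` of a boundary
vertex of `T(r)` are contracted into `x`, and non-descendants of `r` are
contracted into `d(r)`. -/
def ContractsTo (E : Set (V × V)) (s r v x : V) : Prop :=
  (InTree E s r v ∧ x = v) ∨
  (Dom E s r v ∧ ¬ InTree E s r v ∧ Marked E s x ∧ Dom E s x v ∧
    ∃ u, InTree E s r u ∧ Idom E s u x) ∨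
  (¬ Dom E s r v ∧ Idom E s x r)

/-- The edge set of the first-level auxiliary graph `G_r`. -/
def AuxE (E : Set (V × V)) (s r : V) : Set (V × V) :=
  {e | ∃ a b, (a, b) ∈ E ∧ ContractsTo E s r a e.1 ∧ ContractsTo E s r b e.2}

def cutEdges (E : Set (V × V)) (U W : Set V) : Set (V × V) :=
  {e ∈ E | e.1 ∈ U ∧ e.2 ∈ W}

def IsCut (u w : V) (U W : Set V) : Prop := u ∈ U ∧ w ∈ W ∧ Disjoint U W

def IsMinCut (E : Set (V × V)) (u w : V) (U W : Set V) : Prop :=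
  IsCut u w U W ∧ ∀ U' W' : Set V, IsCut u w U' W' →
    (cutEdges E U W).ncard ≤ (cutEdges E U' W').ncard

/-- There exist `k` pairwise edge-disjoint walks from `u` to `w`. -/
def HasEDP (E : Set (V × V)) (u w : V) (k : ℕ) : Prop :=
  ∃ P : Fin k → List (V × V), (∀ i, IsWalk E u w (P i)) ∧
    ∀ i j, i ≠ j → (P i).Disjoint (P j)

/-- The (loop-free, simple) quotient of the inter-component edges `F` under the
component map `h`. -/
def quotE {V' : Type*} (h : V → V') (F : Set (V × V)) : Set (V' × V') :=
  {q | ∃ e ∈ F, h e.1 = q.1 ∧ h e.2 = q.2 ∧ q.1 ≠ q.2}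

/-- A solution to 2EC-C: a strongly connected spanning subgraph with the same
2-edge-connected components. -/
def IsSolutionC (E E' : Set (V × V)) : Prop :=
  E' ⊆ E ∧ StronglyConnected E' ∧
    ∀ C : Set V, Is2ECComponent E C ↔ Is2ECComponent E' C

/-- One step of the deletion process: delete an edge `(x,y)` such that two
edge-disjoint `x → y` paths remain. -/
def DelStep (E₁ E₂ : Set (V × V)) : Prop :=
  ∃ x y : V, (x, y) ∈ E₁ ∧ E₂ = E₁ \ {(x, y)} ∧ TwoEDP E₂ x y


/-!
Menger for two paths: if no single edge separates `a` from `b`, take an `a`–`b` walk `p`;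
either its residual graph has an `a`–`b` walk, and augmenting gives a flow of value two
that splits into two edge-disjoint walks, or the set reached from `a` in the residual graph
is left by a single edge of `G`, which then separates `a` from `b`. If an edge `e`
separates `u` from `w`, the vertices reached from `u` in `G - e` form a union of
2-edge-connected components (deleting one edge does not disconnect a component), i.e. a cut
of the condensed graph crossed by `e` alone. Conversely, each of two edge-disjoint walks
crosses every cut.
-/

section Walks

variable {E E' : Set (V × V)} {a b c : V} {p q : List (V × V)}

theorem IsWalk.mono (hp : IsWalk E a b p) (hE : E ⊆ E') : IsWalk E' a b p := by
  induction hp with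
  | nil => exact .nil _
  | cons he _ ih => exact .cons (hE he) ih

theorem IsWalk.mem_of_mem (hp : IsWalk E a b p) {e : V × V} (he : e ∈ p) : e ∈ E := by
  induction hp with
  | nil => simp at he
  | cons hxy _ ih =>
    rcases List.mem_cons.1 he with rfl | he
    · exact hxy
    · exact ih he

theorem IsWalk.append (hp : IsWalk E a b p) (hq : IsWalk E b c q) :
    IsWalk E a c (p ++ q) := by
  induction hp with
  | nil => exact hq
  | cons he _ ih => exact .cons he (ih hq)

theorem IsWalk.of_append (h : IsWalk E a c (p ++ q)) :
    ∃ b, IsWalk E a b p ∧ IsWalk E b c q := by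
  induction p generalizing a with
  | nil => exact ⟨a, .nil a, h⟩
  | cons e p ih =>
    cases h with
    | cons he hp =>
      obtain ⟨b, hpb, hbq⟩ := ih hp
      exact ⟨b, .cons he hpb, hbq⟩

theorem IsWalk.exists_nodup (hp : IsWalk E a b p) : ∃ q, IsWalk E a b q ∧ q.Nodup := by
  induction hp with
  | nil => exact ⟨[], .nil _, List.nodup_nil⟩
  | @cons x y _ _ hxy _ ih =>
    obtain ⟨q, hq, hqnd⟩ := ih
    by_cases hmem : (x, y) ∈ q
    · -- shortcut the cycle: keep only the part of `q` from its edge `(x, y)` on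
      obtain ⟨s, t, rfl⟩ := List.append_of_mem hmem
      obtain ⟨m, -, hm⟩ := hq.of_append
      cases hm with
      | cons hxy ht => exact ⟨_, .cons hxy ht, hqnd.sublist (List.sublist_append_right _ _)⟩
    · exact ⟨_, .cons hxy hq, List.nodup_cons.2 ⟨hmem, hqnd⟩⟩

theorem Reaches.refl (a : V) : Reaches E a a := ⟨[], .nil a⟩

theorem Reaches.trans (hab : Reaches E a b) (hbc : Reaches E b c) : Reaches E a c :=
  let ⟨_, hp⟩ := hab
  let ⟨_, hq⟩ := hbc
  ⟨_, hp.append hq⟩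

theorem Reaches.mono (h : Reaches E a b) (hE : E ⊆ E') : Reaches E' a b :=
  let ⟨_, hp⟩ := h
  ⟨_, hp.mono hE⟩

theorem reaches_of_mem (h : (a, b) ∈ E) : Reaches E a b := ⟨_, .cons h (.nil b)⟩

theorem Reaches.exists_nodup (h : Reaches E a b) : ∃ p, IsWalk E a b p ∧ p.Nodup :=
  let ⟨_, hp⟩ := h
  hp.exists_nodup

end Walks

section Crossing

variable {E : Set (V × V)} {U : Set V} {a b : V} {p : List (V × V)}

theorem IsWalk.exists_mem_leaving (hp : IsWalk E a b p) (ha : a ∈ U) (hb : b ∉ U) :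
    ∃ e ∈ p, e.1 ∈ U ∧ e.2 ∉ U := by
  induction hp with
  | nil => exact absurd ha hb
  | @cons x y _ _ _ _ ih =>
    by_cases hy : y ∈ U
    · obtain ⟨e, he, hleave⟩ := ih hy hb
      exact ⟨e, List.mem_cons_of_mem _ he, hleave⟩
    · exact ⟨(x, y), List.mem_cons_self, ha, hy⟩

theorem IsWalk.fst_notMem_of_notMem (hp : IsWalk E a b p) (ha : a ∉ U)
    (hU : ∀ e ∈ p, e.2 ∈ U → e.1 ∈ U) : ∀ e ∈ p, e.1 ∉ U := by
  induction hp with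
  | nil => simp
  | @cons x y _ _ _ _ ih =>
    have hy : y ∉ U := fun hy => ha (hU (x, y) List.mem_cons_self hy)
    rintro e (_ | ⟨_, he⟩)
    · exact ha
    · exact ih hy (fun e he => hU e (List.mem_cons_of_mem _ he)) e he

theorem IsWalk.eq_of_leaving (hp : IsWalk E a b p) (hU : ∀ e ∈ p, e.2 ∈ U → e.1 ∈ U)
    {e₁ e₂ : V × V} (he₁ : e₁ ∈ p) (he₂ : e₂ ∈ p) (h₁ : e₁.1 ∈ U ∧ e₁.2 ∉ U)
    (h₂ : e₂.1 ∈ U ∧ e₂.2 ∉ U) : e₁ = e₂ := by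
  induction hp with
  | nil => simp at he₁
  | @cons x y _ _ _ hp ih =>
    have hU' : ∀ e : V × V, e ∈ _ → e.2 ∈ U → e.1 ∈ U := fun e he =>
      hU e (List.mem_cons_of_mem _ he)
    rcases List.mem_cons.1 he₁ with rfl | he₁ <;> rcases List.mem_cons.1 he₂ with rfl | he₂
    · rfl
    · exact absurd h₂.1 (hp.fst_notMem_of_notMem h₁.2 hU' e₂ he₂)
    · exact absurd h₁.1 (hp.fst_notMem_of_notMem h₂.2 hU' e₁ he₁)
    · exact ih hU' he₁ he₂

theorem TwoEDP.exists_two_leaving (h : TwoEDP E a b) (ha : a ∈ U) (hb : b ∉ U) :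
    ∃ e₁ ∈ E, ∃ e₂ ∈ E, e₁ ≠ e₂ ∧ (e₁.1 ∈ U ∧ e₁.2 ∉ U) ∧ (e₂.1 ∈ U ∧ e₂.2 ∉ U) := by
  obtain ⟨p, q, hp, hq, hpq⟩ := h
  obtain ⟨e₁, he₁, h₁⟩ := hp.exists_mem_leaving ha hb
  obtain ⟨e₂, he₂, h₂⟩ := hq.exists_mem_leaving ha hb
  exact ⟨e₁, hp.mem_of_mem he₁, e₂, hq.mem_of_mem he₂,
    fun h => hpq he₁ (h ▸ he₂), h₁, h₂⟩

end Crossing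

section Boundary

variable [DecidableEq V] {E : Set (V × V)} {a b : V} {p : List (V × V)}

def boundary (F : Finset (V × V)) : V → ℤ :=
  ∑ e ∈ F, (Pi.single e.1 1 - Pi.single e.2 1)

theorem boundary_union {A B : Finset (V × V)} (h : Disjoint A B) :
    boundary (A ∪ B) = boundary A + boundary B :=
  Finset.sum_union h

theorem boundary_sdiff {A B : Finset (V × V)} (h : B ⊆ A) :
    boundary (A \ B) = boundary A - boundary B :=
  eq_sub_of_add_eq (Finset.sum_sdiff h)

theorem boundary_image_swap (A : Finset (V × V)) :
    boundary (A.image Prod.swap) = -boundary A := by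
  rw [boundary, Finset.sum_image Prod.swap_injective.injOn, boundary,
    ← Finset.sum_neg_distrib]
  simp

theorem boundary_filter_add_boundary_filter_not (A : Finset (V × V)) (P : V × V → Prop)
    [DecidablePred P] : boundary (A.filter P) + boundary (A.filter (¬ P ·)) = boundary A :=
  Finset.sum_filter_add_sum_filter_not A P _

theorem IsWalk.boundary_toFinset (hp : IsWalk E a b p) (hnd : p.Nodup) :
    boundary p.toFinset = Pi.single a 1 - Pi.single b 1 := by
  rw [boundary, List.sum_toFinset _ hnd]
  induction hp with
  | nil => simp
  | cons _ _ ih =>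
    rw [List.map_cons, List.sum_cons, ih (List.nodup_cons.1 hnd).2]
    abel

/-- Flow conservation: an edge set whose boundary is a positive multiple of that of an
`a`–`b` walk contains such a walk, since otherwise the net outflow of the set of
vertices it reaches from `a` would be both positive and nonpositive. -/
theorem reaches_of_boundary_eq_smul {F : Finset (V × V)} {k : ℤ} (hk : 0 < k)
    (hF : boundary F = k • (Pi.single a 1 - Pi.single b 1)) : Reaches (↑F) a b := by
  classical
  by_contra hab
  set W := (insert a (F.image Prod.snd)).filter (Reaches (↑F) a)
  have haW : a ∈ W := by simp [W, Reaches.refl a]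
  have hbW : b ∉ W := by simp [W, hab]
  have hclosed : ∀ e ∈ F, e.1 ∈ W → e.2 ∈ W := fun e he h1 => by
    simp only [W, Finset.mem_filter] at h1 ⊢
    exact ⟨Finset.mem_insert_of_mem (Finset.mem_image_of_mem _ he),
      h1.2.trans (reaches_of_mem (by simpa using he))⟩
  have houtflow : ∑ v ∈ W, boundary F v =
      ∑ e ∈ F, ((if e.1 ∈ W then 1 else 0) - if e.2 ∈ W then 1 else 0) := by
    simp only [boundary, Finset.sum_apply, Pi.sub_apply]
    rw [Finset.sum_comm]
    simp [Finset.sum_sub_distrib, Finset.sum_pi_single']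
  have hnonpos : ∑ e ∈ F, ((if e.1 ∈ W then 1 else 0) - if e.2 ∈ W then (1 : ℤ) else 0) ≤ 0 :=
    Finset.sum_nonpos fun e he => by
      have := hclosed e he
      split_ifs <;> simp_all
  have hnet : ∑ v ∈ W, boundary F v = k := by
    simp only [hF, Pi.smul_apply, Pi.sub_apply, smul_eq_mul, ← Finset.mul_sum,
      Finset.sum_sub_distrib, Finset.sum_pi_single', if_pos haW, if_neg hbW]
    ring
  linarith

end Boundary

section Menger

variable {E : Set (V × V)} {a b : V} {p : List (V × V)}

/-- The residual graph of the unit flow along `p`. -/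
def residualE (E : Set (V × V)) (p : List (V × V)) : Set (V × V) :=
  {e | e ∈ E ∧ e ∉ p ∨ e.swap ∈ p}

/-- Augmenting along `q`: the edges of `p` not cancelled by a reversed edge of `q`,
together with the forward edges of `q`, carry a flow of value two. -/
theorem twoEDP_of_reaches_residualE (hp : IsWalk E a b p) (hpnd : p.Nodup)
    (hR : Reaches (residualE E p) a b) : TwoEDP E a b := by
  classical
  obtain ⟨q, hq, hqnd⟩ := hR.exists_nodup
  set back := q.toFinset.filter (fun e => e.swap ∈ p)
  set fwd := q.toFinset.filter (fun e => e.swap ∉ p)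
  set F := (p.toFinset \ back.image Prod.swap) ∪ fwd
  have hfwd : ∀ e ∈ fwd, e ∈ E ∧ e ∉ p := fun e he => by
    simp only [fwd, Finset.mem_filter, List.mem_toFinset] at he
    simpa [residualE, he.2] using hq.mem_of_mem he.1
  have hback : back.image Prod.swap ⊆ p.toFinset := by
    intro e he
    simp only [back, Finset.mem_image, Finset.mem_filter, List.mem_toFinset] at he
    obtain ⟨e', ⟨-, he'⟩, rfl⟩ := he
    simpa using he'
  have hFE : ∀ e ∈ F, e ∈ E := by
    intro e he
    rcases Finset.mem_union.1 he with he | he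
    · exact hp.mem_of_mem (List.mem_toFinset.1 (Finset.mem_sdiff.1 he).1)
    · exact (hfwd e he).1
  have hdisj : Disjoint (p.toFinset \ back.image Prod.swap) fwd :=
    Finset.disjoint_left.2 fun e he he' =>
      (hfwd e he').2 (List.mem_toFinset.1 (Finset.mem_sdiff.1 he).1)
  have hF : boundary F = (2 : ℤ) • (Pi.single a 1 - Pi.single b 1) := by
    have hsplit := boundary_filter_add_boundary_filter_not q.toFinset (fun e => e.swap ∈ p)
    rw [hq.boundary_toFinset hqnd] at hsplit
    rw [boundary_union hdisj, boundary_sdiff hback, boundary_image_swap,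
      hp.boundary_toFinset hpnd, two_smul, ← hsplit]
    abel
  obtain ⟨p₁, hp₁, hp₁nd⟩ := (reaches_of_boundary_eq_smul two_pos hF).exists_nodup
  have hp₁F : p₁.toFinset ⊆ F := fun e he => hp₁.mem_of_mem (List.mem_toFinset.1 he)
  have hF₂ : boundary (F \ p₁.toFinset) = (1 : ℤ) • (Pi.single a 1 - Pi.single b 1) := by
    rw [boundary_sdiff hp₁F, hF, hp₁.boundary_toFinset hp₁nd]
    module
  obtain ⟨p₂, hp₂⟩ := reaches_of_boundary_eq_smul one_pos hF₂
  refine ⟨p₁, p₂, hp₁.mono fun e he => hFE e he,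
    hp₂.mono fun e he => hFE e (Finset.mem_sdiff.1 he).1, fun e he₁ he₂ => ?_⟩
  exact (Finset.mem_sdiff.1 (hp₂.mem_of_mem he₂)).2 (List.mem_toFinset.2 he₁)

/-- If the residual graph has no `a`–`b` walk, the set `U` it reaches from `a` is left by
a single edge of `E`: an edge of `E` off `p` leaving `U` would lie in the residual graph,
and `p` leaves `U` only once since its reversed edges never enter `U`. -/
theorem exists_not_reaches_sdiff_of_not_reaches_residualE (hp : IsWalk E a b p)
    (hR : ¬ Reaches (residualE E p) a b) : ∃ e, ¬ Reaches (E \ {e}) a b := by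
  set U := {x | Reaches (residualE E p) a x}
  have hclosed : ∀ e ∈ residualE E p, e.1 ∈ U → e.2 ∈ U := fun e he h1 =>
    Reaches.trans h1 (reaches_of_mem he)
  have hp_enter : ∀ e ∈ p, e.2 ∈ U → e.1 ∈ U := fun e he h2 =>
    hclosed e.swap (Or.inr (by simpa using he)) h2
  obtain ⟨e, hep, he⟩ := hp.exists_mem_leaving (U := U) (Reaches.refl a) hR
  refine ⟨e, fun ⟨p', hp'⟩ => ?_⟩
  obtain ⟨e', hep', he'⟩ := hp'.exists_mem_leaving (U := U) (Reaches.refl a) hR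
  obtain ⟨he'E, he'e⟩ := hp'.mem_of_mem hep'
  have he'p : e' ∈ p := by
    by_contra h
    exact he'.2 (hclosed e' (Or.inl ⟨he'E, h⟩) he'.1)
  exact he'e (hp.eq_of_leaving hp_enter he'p hep he' he)

theorem twoEDP_of_forall_reaches_sdiff (h : ∀ e, Reaches (E \ {e}) a b) : TwoEDP E a b := by
  obtain ⟨p, hp, hpnd⟩ := ((h (a, b)).mono Set.sdiff_subset).exists_nodup
  by_cases hR : Reaches (residualE E p) a b
  · exact twoEDP_of_reaches_residualE hp hpnd hR
  · obtain ⟨e, he⟩ := exists_not_reaches_sdiff_of_not_reaches_residualE hp hR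
    exact absurd (h e) he

end Menger

section Components

variable {V' : Type*} {E : Set (V × V)}

theorem Is2ECOn.reaches_sdiff {C : Set V} (hC : Is2ECOn (restrictE E C) C) {x y : V}
    (hx : x ∈ C) (hy : y ∈ C) (e : V × V) : Reaches (E \ {e}) x y := by
  by_cases he : e ∈ restrictE E C
  · exact (hC.2 e he x hx y hy).mono fun f hf => ⟨hf.1.1, hf.2⟩
  · exact (hC.1 x hx y hy).mono fun f hf => ⟨hf.1, fun hfe => he (hfe ▸ hf)⟩

theorem twoEDP_iff_forall_condensed_cut {h : V → V'}
    (hcomp : ∀ u, Is2ECOn (restrictE E {v | h v = h u}) {v | h v = h u}) {a b : V} :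
    TwoEDP E a b ↔ ∀ S T : Set V', Disjoint S T → S ∪ T = Set.univ → h a ∈ S → h b ∈ T →
      ∃ e₁ ∈ E, ∃ e₂ ∈ E, e₁ ≠ e₂ ∧ h e₁.1 ≠ h e₁.2 ∧ h e₂.1 ≠ h e₂.2 ∧
        h e₁.1 ∈ S ∧ h e₁.2 ∈ T ∧ h e₂.1 ∈ S ∧ h e₂.2 ∈ T := by
  constructor
  · intro hab S T hST hcover ha hb
    have hT : ∀ x, h x ∉ S → h x ∈ T := fun x hx =>
      ((hcover.symm ▸ Set.mem_univ (h x)) : h x ∈ S ∪ T).resolve_left hx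
    obtain ⟨e₁, he₁, e₂, he₂, hne, h₁, h₂⟩ :=
      hab.exists_two_leaving (U := h ⁻¹' S) ha (Set.disjoint_right.1 hST hb)
    exact ⟨e₁, he₁, e₂, he₂, hne, fun heq => h₁.2 (Set.mem_preimage.2 (heq ▸ h₁.1)),
      fun heq => h₂.2 (Set.mem_preimage.2 (heq ▸ h₂.1)), h₁.1, hT _ h₁.2, h₂.1, hT _ h₂.2⟩
  · intro hcut
    refine twoEDP_of_forall_reaches_sdiff fun e => by_contra fun hab => ?_
    set U := {x | Reaches (E \ {e}) a x}
    have hsat : ∀ x ∈ U, ∀ y, h y = h x → y ∈ U := fun x hx y hyx =>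
      Reaches.trans hx ((hcomp x).reaches_sdiff rfl hyx e)
    have hmemS : ∀ x, h x ∈ h '' U ↔ x ∈ U := fun x =>
      ⟨fun ⟨y, hy, hyx⟩ => hsat y hy x hyx.symm, fun hx => ⟨x, hx, rfl⟩⟩
    have hleave : ∀ f ∈ E, h f.1 ∈ h '' U → h f.2 ∈ (h '' U)ᶜ → f = e := by
      intro f hf h₁ h₂
      by_contra hfe
      exact h₂ ((hmemS _).2 (Reaches.trans ((hmemS _).1 h₁) (reaches_of_mem ⟨hf, hfe⟩)))
    obtain ⟨e₁, he₁, e₂, he₂, hne, -, -, h₁S, h₁T, h₂S, h₂T⟩ :=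
      hcut (h '' U) (h '' U)ᶜ disjoint_compl_right (Set.union_compl_self _)
        ((hmemS a).2 (Reaches.refl a)) (fun hb => hab ((hmemS b).1 hb))
    exact hne ((hleave e₁ he₁ h₁S h₁T).trans (hleave e₂ he₂ h₂S h₂T).symm)

end Components

theorem stmt10_general {V' : Type*} (E : Set (V × V)) (h : V → V')
    (hcomp : ∀ u : V, Is2ECComponent E {v | h v = h u})
    (u w : V) :
    TwoEC E u w ↔
      ∀ S T : Set V', Disjoint S T → S ∪ T = Set.univ → h u ∈ S → h w ∈ T →
        (∃ e₁ ∈ E, ∃ e₂ ∈ E, e₁ ≠ e₂ ∧ h e₁.1 ≠ h e₁.2 ∧ h e₂.1 ≠ h e₂.2 ∧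
          h e₁.1 ∈ S ∧ h e₁.2 ∈ T ∧ h e₂.1 ∈ S ∧ h e₂.2 ∈ T) ∧
        (∃ e₁ ∈ E, ∃ e₂ ∈ E, e₁ ≠ e₂ ∧ h e₁.1 ≠ h e₁.2 ∧ h e₂.1 ≠ h e₂.2 ∧
          h e₁.1 ∈ T ∧ h e₁.2 ∈ S ∧ h e₂.1 ∈ T ∧ h e₂.2 ∈ S) := by
  have hcut := @twoEDP_iff_forall_condensed_cut _ _ E h fun u => (hcomp u).1
  rw [TwoEC, hcut, hcut]
  constructor
  · rintro ⟨huw, hwu⟩ S T hST hcover hu hw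
    exact ⟨huw S T hST hcover hu hw, hwu T S hST.symm (Set.union_comm S T ▸ hcover) hw hu⟩
  · intro H
    exact ⟨fun S T hST hcover hu hw => (H S T hST hcover hu hw).1,
      fun S T hST hcover hw hu => (H T S hST.symm (Set.union_comm S T ▸ hcover) hu hw).2⟩

theorem stmt10 {V' : Type*} [Fintype V] (E : Set (V × V)) (h : V → V')
    (hsurj : Function.Surjective h)
    (hSC : StronglyConnected E)
    (hcomp : ∀ u : V, Is2ECComponent E {v | h v = h u})
    (u w : V) (hdiff : h u ≠ h w) :
    TwoEC E u w ↔
      ∀ S T : Set V', Disjoint S T → S ∪ T = Set.univ → h u ∈ S → h w ∈ T →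
        (∃ e₁ ∈ E, ∃ e₂ ∈ E, e₁ ≠ e₂ ∧ h e₁.1 ≠ h e₁.2 ∧ h e₂.1 ≠ h e₂.2 ∧
          h e₁.1 ∈ S ∧ h e₁.2 ∈ T ∧ h e₂.1 ∈ S ∧ h e₂.2 ∈ T) ∧
        (∃ e₁ ∈ E, ∃ e₂ ∈ E, e₁ ≠ e₂ ∧ h e₁.1 ≠ h e₁.2 ∧ h e₂.1 ≠ h e₂.2 ∧
          h e₁.1 ∈ T ∧ h e₁.2 ∈ S ∧ h e₂.1 ∈ T ∧ h e₂.2 ∈ S) :=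
  stmt10_general E h hcomp u w
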